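/- Let A be the 3-dimensional complex algebra with basis e1,e2,e3 and products e1e1 = e2, e2e1 = e3. For each x ∈ ℂ* and y,z ∈ ℂ, the linear map φ with matrix [[x,0,0],[y,x²,0],[z,xy,x³]] (columns giving images of e1,e2,e3 in the basis) is an automorphism of A, and every automorphism of A has this form. -/
import Mathlib


/-- Basis vectors of ℂ³. -/
noncomputable def e3 (i : Fin 3) : Fin 3 → ℂ := Pi.single i 1

/-- The algebra with e1e1 = e2, e2e1 = e3. -/
noncomputable def mulCD303 (u v : Fin 3 → ℂ) : Fin 3 → ℂ :=
  Pi.single (1 : Fin 3) (u 0 * v 0) + Pi.single (2 : Fin 3) (u 1 * v 0)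

lemma decomp3 (u : Fin 3 → ℂ) : u = u 0 • e3 0 + u 1 • e3 1 + u 2 • e3 2 := by
  funext i
  fin_cases i <;> simp [e3, Pi.single_apply]

/-- The automorphisms of the algebra e1e1=e2, e2e1=e3 are exactly the maps
with matrix [[x,0,0],[y,x²,0],[z,xy,x³]], x ≠ 0. -/
theorem aut_of_CD303 (φ : (Fin 3 → ℂ) ≃ₗ[ℂ] (Fin 3 → ℂ)) :
    (∀ u v : Fin 3 → ℂ, φ (mulCD303 u v) = mulCD303 (φ u) (φ v)) ↔
      ∃ x y z : ℂ, x ≠ 0 ∧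
        φ (e3 0) = x • e3 0 + y • e3 1 + z • e3 2 ∧
        φ (e3 1) = (x ^ 2) • e3 1 + (x * y) • e3 2 ∧
        φ (e3 2) = (x ^ 3) • e3 2 := by
  constructor
  · intro h
    set x := φ (e3 0) 0 with hx
    set y := φ (e3 0) 1 with hy
    set z := φ (e3 0) 2 with hz
    have he1 : φ (e3 0) = x • e3 0 + y • e3 1 + z • e3 2 := decomp3 _
    have hx' : φ (Pi.single (0 : Fin 3) (1 : ℂ)) 0 = x := rfl
    have hy' : φ (Pi.single (0 : Fin 3) (1 : ℂ)) 1 = y := rfl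
    have e2eq : (e3 1 : Fin 3 → ℂ) = mulCD303 (e3 0) (e3 0) := by
      funext i; fin_cases i <;> simp [e3, mulCD303, Pi.single_apply]
    have he2 : φ (e3 1) = (x ^ 2) • e3 1 + (x * y) • e3 2 := by
      rw [e2eq, h]
      funext i
      fin_cases i <;> simp [mulCD303, e3, Pi.single_apply, hx', hy'] <;> ring
    have e3eq : (e3 2 : Fin 3 → ℂ) = mulCD303 (e3 1) (e3 0) := by
      funext i; fin_cases i <;> simp [e3, mulCD303, Pi.single_apply]
    have he3 : φ (e3 2) = (x ^ 3) • e3 2 := by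
      rw [e3eq, h, he2]
      funext i
      fin_cases i <;> simp [mulCD303, e3, Pi.single_apply, hx'] <;> ring
    refine ⟨x, y, z, ?_, he1, he2, he3⟩
    intro hx0
    have : φ (e3 2) = 0 := by rw [he3, hx0]; simp
    have h0 : (e3 2 : Fin 3 → ℂ) = 0 := by
      have := φ.map_eq_zero_iff.mp this
      exact this
    have := congrFun h0 2
    simp [e3, Pi.single_apply] at this
  · rintro ⟨x, y, z, hx, h1, h2, h3⟩ u v
    have hu : ∀ w : Fin 3 → ℂ, φ w =
        w 0 • (x • e3 0 + y • e3 1 + z • e3 2) +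
        w 1 • ((x ^ 2) • e3 1 + (x * y) • e3 2) +
        w 2 • ((x ^ 3) • e3 2) := by
      intro w
      conv_lhs => rw [decomp3 w]
      rw [map_add, map_add, map_smul, map_smul, map_smul, h1, h2, h3]
    rw [hu, hu, hu]
    funext i
    fin_cases i <;> simp [mulCD303, e3, Pi.single_apply] <;> ring
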